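/- arXiv:1212.4415 — 3 statements merged into one kernel-verified Lean document; each statement's English description precedes it below -/
import Mathlib

section
/- Let K ⊆ ℝ^m be a closed convex cone with dual K* and let C ⊆ ℝ^m be a nonempty closed convex set. If C is K-invariant (i.e., x, y ∈ C implies P_{x-K}(y) ∈ C and P_{x+K}(y) ∈ C), then the projection P_C is K-isotone: x ≤_K y implies P_C(x) ≤_K P_C(y). -/
/-!
Put `u = P_C x`, `v = P_C y` and `p = P_K (v - u)`. Translating the projection onto `K` gives
`v ⊓ u = v - p` and `u ⊔ v = u + p`, so both points lie in `C` by invariance. By Moreau,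
`q = p - (v - u)` lies in `K*` and is orthogonal to `p`. Testing the variational inequalities of
`u` and `v` against `v - p` and `u + p`, and pairing `q` with `y - x ∈ K`, gives
`0 ≤ ⟪q, v - u⟫`; hence `‖q‖² = ⟪q, p⟫ - ⟪q, v - u⟫ ≤ 0`, so `v - u = p ∈ K`.
-/

open RealInnerProductSpace

noncomputable section

abbrev E (m : ℕ) := EuclideanSpace ℝ (Fin m)

/-- `P` is the metric projection map: for every nonempty closed convex set `D`,
`P D x` lies in `D` and satisfies the variational characterization. -/
def IsProjMap {m : ℕ} (P : Set (E m) → E m → E m) : Prop :=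
  ∀ D : Set (E m), D.Nonempty → IsClosed D → Convex ℝ D →
    ∀ x, P D x ∈ D ∧ ∀ y ∈ D, ⟪P D x - x, P D x - y⟫ ≤ 0

/-- The dual cone of `K`. -/
def dualCone {m : ℕ} (K : Set (E m)) : Set (E m) :=
  {y | ∀ x ∈ K, 0 ≤ ⟪x, y⟫}

/-- `x ⊓ y = P_{x-K} y`. -/
def meet {m : ℕ} (P : Set (E m) → E m → E m) (K : Set (E m)) (x y : E m) : E m :=
  P ((fun k => x - k) '' K) y

/-- `x ⊔ y = P_{x+K} y`. -/
def join {m : ℕ} (P : Set (E m) → E m → E m) (K : Set (E m)) (x y : E m) : E m :=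
  P ((fun k => x + k) '' K) y

/-- `C` is `K`-invariant: closed under `meet` and `join`. -/
def KInv {m : ℕ} (P : Set (E m) → E m → E m) (K C : Set (E m)) : Prop :=
  ∀ x ∈ C, ∀ y ∈ C, meet P K x y ∈ C ∧ join P K x y ∈ C

section InnerProductSpace

variable {F : Type*} [NormedAddCommGroup F] [InnerProductSpace ℝ F]

lemma eq_of_forall_inner_sub_nonpos {D : Set F} {x z₁ z₂ : F} (h₁ : z₁ ∈ D) (h₂ : z₂ ∈ D)
    (hz₁ : ∀ c ∈ D, ⟪z₁ - x, z₁ - c⟫ ≤ 0) (hz₂ : ∀ c ∈ D, ⟪z₂ - x, z₂ - c⟫ ≤ 0) :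
    z₁ = z₂ := by
  have h : ⟪z₁ - z₂, z₁ - z₂⟫ = ⟪z₁ - x, z₁ - z₂⟫ + ⟪z₂ - x, z₂ - z₁⟫ := by
    simp only [inner_sub_left, inner_sub_right, real_inner_comm z₂ z₁]
    ring
  have : ⟪z₁ - z₂, z₁ - z₂⟫ ≤ 0 := by linarith [hz₁ z₂ h₂, hz₂ z₁ h₁]
  exact sub_eq_zero.mp (real_inner_self_nonpos.mp this)

lemma cone_proj_sub_orthogonal_and_mem_dual {K : Set F} (hKconv : Convex ℝ K)
    (hKcone : ∀ t : ℝ, 0 ≤ t → ∀ v ∈ K, t • v ∈ K) {d p : F} (hp : p ∈ K)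
    (hvar : ∀ k ∈ K, ⟪p - d, p - k⟫ ≤ 0) :
    ⟪p - d, p⟫ = 0 ∧ ∀ k ∈ K, 0 ≤ ⟪p - d, k⟫ := by
  have h_zero : ⟪p - d, p⟫ ≤ 0 := by simpa using hvar 0 (by simpa using hKcone 0 le_rfl p hp)
  have h_two : 0 ≤ ⟪p - d, p⟫ := by
    have h := hvar ((2 : ℝ) • p) (hKcone 2 zero_le_two p hp)
    rw [show p - (2 : ℝ) • p = -p by module, inner_neg_right] at h
    linarith
  refine ⟨le_antisymm h_zero h_two, fun k hk => ?_⟩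
  have hpk : p + k ∈ K := by
    have h := hKcone 2 zero_le_two _
      (hKconv hp hk (a := 1 / 2) (b := 1 / 2) (by norm_num) (by norm_num) (by norm_num))
    rwa [show (2 : ℝ) • ((1 / 2 : ℝ) • p + (1 / 2 : ℝ) • k) = p + k by module] at h
  have h := hvar _ hpk
  rw [show p - (p + k) = -k by abel, inner_neg_right] at h
  linarith

lemma eq_of_inner_sub_eq_zero_of_inner_sub_nonneg {d p : F} (horth : ⟪p - d, p⟫ = 0)
    (hd : 0 ≤ ⟪p - d, d⟫) : d = p := by
  have : ⟪p - d, p - d⟫ ≤ 0 := by rw [inner_sub_right, horth]; linarith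
  exact (sub_eq_zero.mp (real_inner_self_nonpos.mp this)).symm

end InnerProductSpace

section ProjMap

variable {m : ℕ} {P : Set (E m) → E m → E m} {K : Set (E m)}

lemma join_eq_add_proj (hP : IsProjMap P) (hK : K.Nonempty) (hKcl : IsClosed K)
    (hKconv : Convex ℝ K) (w z : E m) : join P K w z = w + P K (z - w) := by
  have hcl : IsClosed ((fun k => w + k) '' K) := (Homeomorph.addLeft w).isClosedMap _ hKcl
  obtain ⟨hmem, hvar⟩ := hP _ (hK.image _) hcl (hKconv.translate w) z
  obtain ⟨hpK, hpvar⟩ := hP K hK hKcl hKconv (z - w)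
  refine eq_of_forall_inner_sub_nonpos hmem ⟨_, hpK, rfl⟩ hvar ?_
  rintro _ ⟨k, hk, rfl⟩
  dsimp only
  convert hpvar k hk using 2 <;> abel

lemma meet_eq_sub_proj (hP : IsProjMap P) (hK : K.Nonempty) (hKcl : IsClosed K)
    (hKconv : Convex ℝ K) (w z : E m) : meet P K w z = w - P K (w - z) := by
  have hcl : IsClosed ((fun k => w - k) '' K) := (Homeomorph.subLeft w).isClosedMap _ hKcl
  have hconv : Convex ℝ ((fun k => w - k) '' K) := by
    simpa only [neg_one_smul, ← sub_eq_add_neg] using hKconv.affinity w (-1)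
  obtain ⟨hmem, hvar⟩ := hP _ (hK.image _) hcl hconv z
  obtain ⟨hpK, hpvar⟩ := hP K hK hKcl hKconv (w - z)
  refine eq_of_forall_inner_sub_nonpos hmem ⟨_, hpK, rfl⟩ hvar ?_
  rintro _ ⟨k, hk, rfl⟩
  dsimp only
  rw [← inner_neg_neg]
  convert hpvar k hk using 2 <;> abel

end ProjMap

theorem invariant_imp_isotone (m : ℕ)
    (P : Set (E m) → E m → E m) (hP : IsProjMap P)
    (K : Set (E m)) (hKcl : IsClosed K) (hKconv : Convex ℝ K)
    (hKcone : ∀ t : ℝ, 0 ≤ t → ∀ v ∈ K, t • v ∈ K) (hK0 : (0 : E m) ∈ K)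
    (C : Set (E m)) (hC : C.Nonempty) (hCcl : IsClosed C) (hCconv : Convex ℝ C)
    (hInv : KInv P K C) :
    ∀ x y : E m, y - x ∈ K → P C y - P C x ∈ K := by
  intro x y hxy
  set u := P C x
  set v := P C y
  obtain ⟨huC, hux⟩ := hP C hC hCcl hCconv x
  obtain ⟨hvC, hvy⟩ := hP C hC hCcl hCconv y
  obtain ⟨hpK, hpvar⟩ := hP K ⟨0, hK0⟩ hKcl hKconv (v - u)
  set p := P K (v - u)
  obtain ⟨horth, hdual⟩ :=
    cone_proj_sub_orthogonal_and_mem_dual hKconv hKcone hpK hpvar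
  have hmeet : v - p ∈ C :=
    meet_eq_sub_proj hP ⟨0, hK0⟩ hKcl hKconv v u ▸ (hInv v hvC u huC).1
  have hjoin : u + p ∈ C :=
    join_eq_add_proj hP ⟨0, hK0⟩ hKcl hKconv u v ▸ (hInv u huC v hvC).2
  have hd : 0 ≤ ⟪p - (v - u), v - u⟫ := by
    have hsum : ⟪p - (v - u), v - u⟫ =
        ⟪p - (v - u), y - x⟫ - ⟪u - x, u - (v - p)⟫ - ⟪v - y, v - (u + p)⟫ := by
      simp only [inner_sub_left, inner_sub_right, inner_add_right, real_inner_comm]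
      ring
    linarith [hdual _ hxy, hux _ hmeet, hvy _ hjoin]
  rw [eq_of_inner_sub_eq_zero_of_inner_sub_nonneg horth hd]
  exact hpK
end
end

section
/- Let K ⊆ ℝ^m be a closed convex cone with dual K*, and let C ⊆ ℝ^m be a set invariant under one of the operations x ⊓ y = P_{x-K}(y), x ⊓_* y = P_{x-K*}(y) and under one of the operations x ⊔ y = P_{x+K}(y), x ⊔_* y = P_{x+K*}(y). Then C is invariant under all four operations ⊓, ⊓_*, ⊔, ⊔_*. -/
open RealInnerProductSpace

noncomputable section

/-! If `p = P_{y-K} x = y - k`, the variational inequality `⟪p - x, k' - k⟫ ≤ 0` (`k' ∈ K`) tested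
at `k' = 0` and `k' = 2k` gives `⟪p - x, k⟫ = 0`, hence `x - p ∈ K*`; these two facts are exactly
the variational characterisation of `P_{x-K*} y`, so `x ⊓_* y = y ⊓ x`. Since `x + K = x - (-K)`
and `(-K)* = -K*`, the same identity for `-K` gives `x ⊔_* y = y ⊔ x`. Thus each starred operation
is the flip of the unstarred one, and a set closed under one is closed under the other. -/

variable {m : ℕ}

lemma dualCone_eq_innerDual (K : Set (E m)) : dualCone K = ProperCone.innerDual K := rfl

lemma dualCone_neg (K : Set (E m)) : dualCone (-K) = -dualCone K := by
  ext y
  simp only [dualCone, Set.mem_neg, Set.mem_ofPred_eq]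
  constructor
  · intro h x hx
    simpa [inner_neg_right, inner_neg_left] using h (-x) (by simpa using hx)
  · intro h x hx
    simpa [inner_neg_right, inner_neg_left] using h (-x) hx

lemma meet_neg (P : Set (E m) → E m → E m) (K : Set (E m)) (x y : E m) :
    meet P (-K) x y = join P K x y := by
  rw [meet, join, ← Set.image_neg_eq_neg, Set.image_image]
  simp only [sub_neg_eq_add]

section Projection

variable {F : Type*} [NormedAddCommGroup F] [InnerProductSpace ℝ F]

lemma eq_of_forall_inner_sub_nonpos_s13 {D : Set F} {x p q : F}
    (hp : p ∈ D) (hpv : ∀ y ∈ D, ⟪p - x, p - y⟫ ≤ 0)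
    (hq : q ∈ D) (hqv : ∀ y ∈ D, ⟪q - x, q - y⟫ ≤ 0) : p = q := by
  have hsum : ⟪p - q, p - q⟫ = ⟪p - x, p - q⟫ + ⟪q - x, q - p⟫ := by
    rw [← neg_sub p q, inner_neg_right, ← sub_eq_add_neg, ← inner_sub_left,
      sub_sub_sub_cancel_right]
  have : ⟪p - q, p - q⟫ ≤ 0 := by linarith [hpv q hq, hqv p hp]
  exact sub_eq_zero.mp (real_inner_self_nonpos.mp this)

lemma inner_eq_zero_of_forall_inner_sub_nonpos {K : Set F}
    (hKcone : ∀ t : ℝ, 0 ≤ t → ∀ v ∈ K, t • v ∈ K) {v k : F} (hk : k ∈ K)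
    (h : ∀ k' ∈ K, ⟪v, k' - k⟫ ≤ 0) : ⟪v, k⟫ = 0 := by
  have h0 := h _ (hKcone 0 le_rfl k hk)
  have h2 := h _ (hKcone 2 zero_le_two k hk)
  rw [zero_smul, zero_sub, inner_neg_right] at h0
  rw [two_smul, add_sub_cancel_right] at h2
  linarith

end Projection

namespace IsProjMap

variable {P : Set (E m) → E m → E m} {K : Set (E m)}

lemma exists_meet_eq (hP : IsProjMap P) (hKne : K.Nonempty) (hKcl : IsClosed K)
    (hKconv : Convex ℝ K) (x y : E m) :
    ∃ k ∈ K, meet P K x y = x - k ∧ ∀ k' ∈ K, ⟪meet P K x y - y, k' - k⟫ ≤ 0 := by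
  obtain ⟨⟨k, hk, hpk⟩, hvar⟩ := hP ((fun k => x - k) '' K) (hKne.image _)
    ((Homeomorph.subLeft x).isClosedMap K hKcl)
    (by simpa only [Set.singleton_sub] using (convex_singleton x).sub hKconv) y
  refine ⟨k, hk, hpk.symm, fun k' hk' => ?_⟩
  have := hvar (x - k') ⟨k', hk', rfl⟩
  rw [← hpk, sub_sub_sub_cancel_left] at this
  rwa [meet, ← hpk]

lemma meet_eq_of_forall_inner_sub_nonpos (hP : IsProjMap P) (hKne : K.Nonempty)
    (hKcl : IsClosed K) (hKconv : Convex ℝ K) {x y p k : E m} (hk : k ∈ K) (hpk : p = x - k)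
    (hvar : ∀ k' ∈ K, ⟪p - y, k' - k⟫ ≤ 0) : meet P K x y = p := by
  obtain ⟨k₀, hk₀, hmeet, hvar₀⟩ := hP.exists_meet_eq hKne hKcl hKconv x y
  refine eq_of_forall_inner_sub_nonpos_s13 (D := (fun k => x - k) '' K) (x := y)
    ⟨k₀, hk₀, hmeet.symm⟩ ?_ ⟨k, hk, hpk.symm⟩ ?_
  · rintro _ ⟨k', hk', rfl⟩
    simpa [hmeet] using hvar₀ k' hk'
  · rintro _ ⟨k', hk', rfl⟩
    simpa [hpk] using hvar k' hk'

theorem meet_dualCone_eq (hP : IsProjMap P) (hKcl : IsClosed K) (hKconv : Convex ℝ K)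
    (hKcone : ∀ t : ℝ, 0 ≤ t → ∀ v ∈ K, t • v ∈ K) (hK0 : (0 : E m) ∈ K) (x y : E m) :
    meet P (dualCone K) x y = meet P K y x := by
  obtain ⟨k, hk, hp, hvar⟩ := hP.exists_meet_eq ⟨0, hK0⟩ hKcl hKconv y x
  set p := meet P K y x
  have hpk : ⟪p - x, k⟫ = 0 := inner_eq_zero_of_forall_inner_sub_nonpos hKcone hk hvar
  have hdual : x - p ∈ dualCone K := fun k' hk' => by
    have := hvar k' hk'
    rw [inner_sub_right, hpk, sub_zero] at this
    rw [← neg_sub p x, inner_neg_right, real_inner_comm]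
    linarith
  have hpy : p - y = -k := by rw [hp]; abel
  rw [dualCone_eq_innerDual] at hdual ⊢
  refine meet_eq_of_forall_inner_sub_nonpos hP (ProperCone.nonempty _) (ProperCone.isClosed _)
    (ProperCone.convex _) hdual (sub_sub_cancel x p).symm fun s hs => ?_
  rw [hpy, inner_neg_left, inner_sub_right, ← neg_sub p x, inner_neg_right,
    real_inner_comm (p - x), hpk]
  linarith [ProperCone.mem_innerDual.mp hs hk]

theorem join_dualCone_eq (hP : IsProjMap P) (hKcl : IsClosed K) (hKconv : Convex ℝ K)
    (hKcone : ∀ t : ℝ, 0 ≤ t → ∀ v ∈ K, t • v ∈ K) (hK0 : (0 : E m) ∈ K) (x y : E m) :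
    join P (dualCone K) x y = join P K y x := by
  have hKcone_neg : ∀ t : ℝ, 0 ≤ t → ∀ v ∈ -K, t • v ∈ -K := fun t ht v hv => by
    simpa only [Set.mem_neg, smul_neg] using hKcone t ht _ hv
  have := hP.meet_dualCone_eq hKcl.neg hKconv.neg hKcone_neg (by simpa using hK0) x y
  rwa [dualCone_neg, meet_neg, meet_neg] at this

end IsProjMap

lemma forall_mem_and_of_eq_swap {α : Type*} {C : Set α} {f g : α → α → α}
    (hfg : ∀ x y, g x y = f y x)
    (h : (∀ x ∈ C, ∀ y ∈ C, f x y ∈ C) ∨ (∀ x ∈ C, ∀ y ∈ C, g x y ∈ C)) :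
    ∀ x ∈ C, ∀ y ∈ C, f x y ∈ C ∧ g x y ∈ C := by
  intro x hx y hy
  rcases h with h | h
  · exact ⟨h x hx y hy, hfg x y ▸ h y hy x hx⟩
  · exact ⟨hfg y x ▸ h y hy x hx, h x hx y hy⟩

theorem invariance_two_ops (m : ℕ)
    (P : Set (E m) → E m → E m) (hP : IsProjMap P)
    (K : Set (E m)) (hKcl : IsClosed K) (hKconv : Convex ℝ K)
    (hKcone : ∀ t : ℝ, 0 ≤ t → ∀ v ∈ K, t • v ∈ K) (hK0 : (0 : E m) ∈ K)
    (C : Set (E m))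
    (hMeet : (∀ x ∈ C, ∀ y ∈ C, meet P K x y ∈ C) ∨
      (∀ x ∈ C, ∀ y ∈ C, meet P (dualCone K) x y ∈ C))
    (hJoin : (∀ x ∈ C, ∀ y ∈ C, join P K x y ∈ C) ∨
      (∀ x ∈ C, ∀ y ∈ C, join P (dualCone K) x y ∈ C)) :
    ∀ x ∈ C, ∀ y ∈ C, meet P K x y ∈ C ∧ meet P (dualCone K) x y ∈ C ∧
      join P K x y ∈ C ∧ join P (dualCone K) x y ∈ C := by
  intro x hx y hy
  obtain ⟨hm, hm'⟩ := forall_mem_and_of_eq_swap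
    (hP.meet_dualCone_eq hKcl hKconv hKcone hK0) hMeet x hx y hy
  obtain ⟨hj, hj'⟩ := forall_mem_and_of_eq_swap
    (hP.join_dualCone_eq hKcl hKconv hKcone hK0) hJoin x hx y hy
  exact ⟨hm, hm', hj, hj'⟩
end
end

section
/- Let K ⊆ ℝ^m be a closed convex cone, u ∈ ℝ^m nonzero, a ∈ ℝ^m, H = {x : ⟨u,x⟩ = ⟨u,a⟩} and H_- = {x : ⟨u,x⟩ ≤ ⟨u,a⟩}. Then H_- is K-invariant if and only if H is K-invariant. -/
open RealInnerProductSpace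

noncomputable section

/-!
Both operations are projections onto translates of a cone, since `x ⊓ y = P_{x + (-K)} y`; so it
suffices to study `⊔` for an arbitrary closed convex cone. If the half-space is invariant, then for
`x, y ∈ H` the points `x ⊓ y` and `y ⊔ x` lie below the level of `H` while their sum `x + y` lies on
it, so both lie on `H`. Conversely, invariance of `H` is inherited by every parallel hyperplane by
translation, so `⊔` preserves every level of `⟪u, ·⟫`. If `x ⊔ y` rose strictly above
`t = max ⟪u, x⟫ ⟪u, y⟫`, pick `z ∈ [x, x ⊔ y]` and `w ∈ [y, x ⊔ y]` at level `t`; then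
`z ⊔ w = x ⊔ y` would lie at level `t`, a contradiction.
-/

open scoped Pointwise

variable {m : ℕ} {P : Set (E m) → E m → E m} {K : Set (E m)}

theorem IsProjMap.apply_eq_of_inner_nonpos (hP : IsProjMap P) {D : Set (E m)}
    (hne : D.Nonempty) (hcl : IsClosed D) (hcv : Convex ℝ D) {z p : E m} (hp : p ∈ D)
    (hvar : ∀ y ∈ D, ⟪p - z, p - y⟫ ≤ 0) : P D z = p := by
  obtain ⟨hq, hqvar⟩ := hP D hne hcl hcv z
  set q := P D z
  have hsum : ⟪q - p, q - p⟫ = ⟪q - z, q - p⟫ + ⟪p - z, p - q⟫ := by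
    rw [← neg_sub q p, inner_neg_right, ← sub_eq_add_neg, ← inner_sub_left,
      sub_sub_sub_cancel_right]
  have := hqvar p hp
  have := hvar q hq
  exact sub_eq_zero.mp (real_inner_self_nonpos.mp (by linarith))

theorem join_eq_iff (hP : IsProjMap P) (hKcl : IsClosed K) (hKconv : Convex ℝ K)
    (hK0 : (0 : E m) ∈ K) {x y p : E m} :
    join P K x y = p ↔ ∃ k ∈ K, p = x + k ∧ ∀ k' ∈ K, ⟪p - y, p - (x + k')⟫ ≤ 0 := by
  have hne : ((fun k => x + k) '' K).Nonempty := ⟨x, 0, hK0, add_zero x⟩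
  have hcl : IsClosed ((fun k => x + k) '' K) := (Homeomorph.addLeft x).isClosedMap _ hKcl
  constructor
  · rintro rfl
    obtain ⟨⟨k, hk, hxk⟩, hvar⟩ := hP _ hne hcl (hKconv.translate x) y
    exact ⟨k, hk, hxk.symm, fun k' hk' => hvar _ ⟨k', hk', rfl⟩⟩
  · rintro ⟨k, hk, rfl, hvar⟩
    refine hP.apply_eq_of_inner_nonpos hne hcl (hKconv.translate x) ⟨k, hk, rfl⟩ ?_
    rintro _ ⟨k', hk', rfl⟩
    exact hvar k' hk'

theorem meet_eq_join_neg (x y : E m) : meet P K x y = join P (-K) x y := by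
  simp only [meet, join, ← Set.image_neg_eq_neg, Set.image_image, sub_eq_add_neg]

theorem join_neg_add_join (hP : IsProjMap P) (hKcl : IsClosed K) (hKconv : Convex ℝ K)
    (hK0 : (0 : E m) ∈ K) (x y : E m) : join P (-K) x y + join P K y x = x + y := by
  obtain ⟨k, hk, hj, hvar⟩ := (join_eq_iff hP hKcl hKconv hK0).mp (rfl : join P K y x = _)
  rw [← eq_sub_iff_add_eq, join_eq_iff hP hKcl.neg hKconv.neg (by simpa using hK0)]
  refine ⟨-k, by simpa using hk, by rw [hj]; abel, fun k' hk' => ?_⟩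
  have e1 : x + y - join P K y x - y = -(join P K y x - x) := by abel
  have e2 : x + y - join P K y x - (x + k') = -(join P K y x - (y + -k')) := by abel
  rw [e1, e2, inner_neg_neg]
  exact hvar _ hk'

theorem join_add_add (hP : IsProjMap P) (hKcl : IsClosed K) (hKconv : Convex ℝ K)
    (hK0 : (0 : E m) ∈ K) (x y v : E m) :
    join P K (x + v) (y + v) = join P K x y + v := by
  obtain ⟨k, hk, hj, hvar⟩ := (join_eq_iff hP hKcl hKconv hK0).mp (rfl : join P K x y = _)
  rw [join_eq_iff hP hKcl hKconv hK0]
  refine ⟨k, hk, by rw [hj]; abel, fun k' hk' => ?_⟩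
  convert hvar k' hk' using 2 <;> abel

theorem join_eq_of_mem_segment (hP : IsProjMap P) (hKcl : IsClosed K) (hKconv : Convex ℝ K)
    (hKcone : ∀ t : ℝ, 0 ≤ t → ∀ v ∈ K, t • v ∈ K) (hK0 : (0 : E m) ∈ K) {x y z w : E m}
    (hz : z ∈ segment ℝ x (join P K x y)) (hw : w ∈ segment ℝ y (join P K x y)) :
    join P K z w = join P K x y := by
  have hadd : ∀ k ∈ K, ∀ k' ∈ K, k + k' ∈ K := fun k hk k' hk' => by
    simpa [← smul_add, smul_smul] using
      hKcone 2 zero_le_two _ (hKconv hk hk' (by norm_num) (by norm_num) (add_halves (1 : ℝ)))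
  obtain ⟨k, hk, hj, hvar⟩ := (join_eq_iff hP hKcl hKconv hK0).mp (rfl : join P K x y = _)
  obtain ⟨a, b, ha, hb, hab, rfl⟩ := hz
  obtain ⟨c, d, hc, -, hcd, rfl⟩ := hw
  obtain rfl : b = 1 - a := by linarith
  obtain rfl : d = 1 - c := by linarith
  set j := join P K x y
  rw [join_eq_iff hP hKcl hKconv hK0]
  refine ⟨a • k, hKcone a ha k hk, by rw [hj]; module, fun k' hk' => ?_⟩
  have hmem := hvar _ (hadd _ (hKcone _ hb k hk) k' hk')
  have e1 : j - (c • y + (1 - c) • j) = c • (j - y) := by module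
  have e2 : j - (a • x + (1 - a) • j + k') = j - (x + ((1 - a) • k + k')) := by
    rw [hj]; module
  rw [e1, e2, real_inner_smul_left]
  exact mul_nonpos_of_nonneg_of_nonpos hc hmem

variable {u a : E m}

theorem inner_join_eq_of_inner_eq (hP : IsProjMap P) (hKcl : IsClosed K) (hKconv : Convex ℝ K)
    (hK0 : (0 : E m) ∈ K)
    (hH : ∀ x y, ⟪u, x⟫ = ⟪u, a⟫ → ⟪u, y⟫ = ⟪u, a⟫ → ⟪u, join P K x y⟫ = ⟪u, a⟫)
    {x y : E m} (hxy : ⟪u, x⟫ = ⟪u, y⟫) : ⟪u, join P K x y⟫ = ⟪u, x⟫ := by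
  have h := hH (x + (a - x)) (y + (a - x)) (by simp)
    (by simp [inner_add_right, inner_sub_right, hxy])
  rw [join_add_add hP hKcl hKconv hK0, inner_add_right, inner_sub_right] at h
  linarith

theorem inner_join_le_max (hP : IsProjMap P) (hKcl : IsClosed K) (hKconv : Convex ℝ K)
    (hKcone : ∀ t : ℝ, 0 ≤ t → ∀ v ∈ K, t • v ∈ K) (hK0 : (0 : E m) ∈ K)
    (hlevel : ∀ x y, ⟪u, x⟫ = ⟪u, y⟫ → ⟪u, join P K x y⟫ = ⟪u, x⟫) (x y : E m) :
    ⟪u, join P K x y⟫ ≤ max ⟪u, x⟫ ⟪u, y⟫ := by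
  by_contra! h
  set j := join P K x y
  have exists_mem_segment_at_max : ∀ z, ⟪u, z⟫ ≤ max ⟪u, x⟫ ⟪u, y⟫ →
      ∃ w ∈ segment ℝ z j, ⟪u, w⟫ = max ⟪u, x⟫ ⟪u, y⟫ := fun z hz =>
    (convex_segment z j).isPreconnected.intermediate_value (left_mem_segment ℝ z j)
      (right_mem_segment ℝ z j) (by fun_prop) ⟨hz, h.le⟩
  obtain ⟨z, hz, hzt⟩ := exists_mem_segment_at_max x (le_max_left _ _)
  obtain ⟨w, hw, hwt⟩ := exists_mem_segment_at_max y (le_max_right _ _)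
  have := hlevel z w (hzt.trans hwt.symm)
  rw [join_eq_of_mem_segment hP hKcl hKconv hKcone hK0 hz hw, hzt] at this
  exact h.ne' this

theorem kInv_hyperplane_of_halfspace (hP : IsProjMap P) (hKcl : IsClosed K)
    (hKconv : Convex ℝ K) (hK0 : (0 : E m) ∈ K) (h : KInv P K {x | ⟪u, x⟫ ≤ ⟪u, a⟫}) :
    KInv P K {x | ⟪u, x⟫ = ⟪u, a⟫} := by
  intro x hx y hy
  simp only [Set.mem_ofPred_eq] at hx hy ⊢
  obtain ⟨hxy₁, hxy₂⟩ := h x hx.le y hy.le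
  obtain ⟨hyx₁, hyx₂⟩ := h y hy.le x hx.le
  simp only [Set.mem_ofPred_eq, meet_eq_join_neg] at hxy₁ hxy₂ hyx₁ hyx₂ ⊢
  have hxy := congrArg (⟪u, ·⟫) (join_neg_add_join hP hKcl hKconv hK0 x y)
  have hyx := congrArg (⟪u, ·⟫) (join_neg_add_join hP hKcl hKconv hK0 y x)
  simp only [inner_add_right] at hxy hyx
  constructor <;> linarith

theorem join_mem_halfspace_of_hyperplane (hP : IsProjMap P) (hKcl : IsClosed K)
    (hKconv : Convex ℝ K) (hKcone : ∀ t : ℝ, 0 ≤ t → ∀ v ∈ K, t • v ∈ K)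
    (hK0 : (0 : E m) ∈ K)
    (hH : ∀ x y, ⟪u, x⟫ = ⟪u, a⟫ → ⟪u, y⟫ = ⟪u, a⟫ → ⟪u, join P K x y⟫ = ⟪u, a⟫)
    {x y : E m} (hx : ⟪u, x⟫ ≤ ⟪u, a⟫) (hy : ⟪u, y⟫ ≤ ⟪u, a⟫) : ⟪u, join P K x y⟫ ≤ ⟪u, a⟫ :=
  (inner_join_le_max hP hKcl hKconv hKcone hK0
    (fun _ _ => inner_join_eq_of_inner_eq hP hKcl hKconv hK0 hH) x y).trans (max_le hx hy)

theorem kInv_halfspace_of_hyperplane (hP : IsProjMap P) (hKcl : IsClosed K)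
    (hKconv : Convex ℝ K) (hKcone : ∀ t : ℝ, 0 ≤ t → ∀ v ∈ K, t • v ∈ K)
    (hK0 : (0 : E m) ∈ K) (h : KInv P K {x | ⟪u, x⟫ = ⟪u, a⟫}) :
    KInv P K {x | ⟪u, x⟫ ≤ ⟪u, a⟫} := by
  have hnegcone : ∀ t : ℝ, 0 ≤ t → ∀ v ∈ -K, t • v ∈ -K := fun t ht v hv => by
    simpa [Set.mem_neg] using hKcone t ht _ hv
  intro x hx y hy
  simp only [KInv, Set.mem_ofPred_eq, meet_eq_join_neg] at h hx hy ⊢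
  exact ⟨join_mem_halfspace_of_hyperplane hP hKcl.neg hKconv.neg hnegcone (by simpa using hK0)
      (fun x y hx hy => (h x hx y hy).1) hx hy,
    join_mem_halfspace_of_hyperplane hP hKcl hKconv hKcone hK0
      (fun x y hx hy => (h x hx y hy).2) hx hy⟩

theorem halfspace_iff_hyperplane_general (m : ℕ)
    (P : Set (E m) → E m → E m) (hP : IsProjMap P)
    (K : Set (E m)) (hKcl : IsClosed K) (hKconv : Convex ℝ K)
    (hKcone : ∀ t : ℝ, 0 ≤ t → ∀ v ∈ K, t • v ∈ K) (hK0 : (0 : E m) ∈ K)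
    (u a : E m) :
    KInv P K {x : E m | ⟪u, x⟫ ≤ ⟪u, a⟫} ↔
      KInv P K {x : E m | ⟪u, x⟫ = ⟪u, a⟫} :=
  ⟨kInv_hyperplane_of_halfspace hP hKcl hKconv hK0,
    kInv_halfspace_of_hyperplane hP hKcl hKconv hKcone hK0⟩

theorem halfspace_iff_hyperplane (m : ℕ)
    (P : Set (E m) → E m → E m) (hP : IsProjMap P)
    (K : Set (E m)) (hKcl : IsClosed K) (hKconv : Convex ℝ K)
    (hKcone : ∀ t : ℝ, 0 ≤ t → ∀ v ∈ K, t • v ∈ K) (hK0 : (0 : E m) ∈ K)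
    (u a : E m) (hu : u ≠ 0) :
    KInv P K {x : E m | ⟪u, x⟫ ≤ ⟪u, a⟫} ↔
      KInv P K {x : E m | ⟪u, x⟫ = ⟪u, a⟫} :=
  halfspace_iff_hyperplane_general m P hP K hKcl hKconv hKcone hK0 u a
end
end
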